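/- arXiv:2108.11322 — 3 statements merged into one kernel-verified Lean document; each statement's English description precedes it below -/
import Mathlib

section
/- Let p > 2 be a prime, n ≥ 1, and γ an integer with γ ≡ 1 (mod p). Define f_γ(δ) = Σ_{i=0}^{δ-1} γ^i. Then for natural numbers δ₁, δ₂ one has f_γ(δ₁) ≡ f_γ(δ₂) (mod p^n) if and only if δ₁ ≡ δ₂ (mod p^n). -/
/-!
Since `f_γ(δ) (γ - 1) = γ^δ - 1`, lifting the exponent (valid as `p` is odd and `p ∣ γ - 1`)
gives `v_p(f_γ(δ)) = v_p(δ)`. Writing `δ₁ = δ₂ + d`, the difference `f_γ(δ₁) - f_γ(δ₂)` is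
`γ^δ₂ f_γ(d)`, and `γ^δ₂` is prime to `p`, so `p^n` divides it exactly when `p^n ∣ d`.
-/

open Finset

lemma geom_sum_range_add {R : Type*} [Semiring R] (x : R) (a d : ℕ) :
    ∑ i ∈ range (a + d), x ^ i = ∑ i ∈ range a, x ^ i + x ^ a * ∑ i ∈ range d, x ^ i := by
  simp only [sum_range_add, pow_add, mul_sum]

namespace Int

variable {p : ℕ} {γ : ℤ}

lemma isCoprime_of_modEq_one {m : ℤ} (h : γ ≡ 1 [ZMOD m]) : IsCoprime m γ := by
  obtain ⟨k, hk⟩ := h.symm.dvd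
  rw [eq_add_of_sub_eq' hk]
  exact isCoprime_one_right.add_mul_left_right k

lemma emultiplicity_geom_sum_of_modEq_one (hp : p.Prime) (hodd : Odd p)
    (hγ : γ ≡ 1 [ZMOD p]) (d : ℕ) :
    emultiplicity (p : ℤ) (∑ i ∈ Finset.range d, γ ^ i) = emultiplicity p d := by
  -- for `γ = 1` the factor `v_p(γ - 1) = ⊤` below could not be cancelled
  rcases eq_or_ne γ 1 with rfl | hγ1
  · simp [Int.natCast_emultiplicity]
  have hpZ : Prime (p : ℤ) := Nat.prime_iff_prime_int.1 hp
  have hpγ1 : (p : ℤ) ∣ γ - 1 := hγ.symm.dvd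
  have hpγ : ¬ (p : ℤ) ∣ γ := fun h ↦
    hpZ.not_dvd_one (by simpa using dvd_sub h hpγ1)
  have hfin : emultiplicity (p : ℤ) (γ - 1) ≠ ⊤ := by
    rw [← finiteMultiplicity_iff_emultiplicity_ne_top, Int.finiteMultiplicity_iff]
    exact ⟨by simpa using hp.ne_one, sub_ne_zero.2 hγ1⟩
  have hLTE := Int.emultiplicity_pow_sub_pow hp hodd hpγ1 hpγ d
  rw [one_pow, ← geom_sum_mul, emultiplicity_mul hpZ,
    add_comm (emultiplicity _ (γ - 1))] at hLTE
  exact WithTop.add_right_cancel hfin hLTE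

lemma pow_dvd_geom_sum_iff (hp : p.Prime) (hodd : Odd p) (hγ : γ ≡ 1 [ZMOD p]) (n d : ℕ) :
    (p : ℤ) ^ n ∣ ∑ i ∈ Finset.range d, γ ^ i ↔ (p : ℤ) ^ n ∣ d := by
  rw [pow_dvd_iff_le_emultiplicity, emultiplicity_geom_sum_of_modEq_one hp hodd hγ,
    ← Int.natCast_emultiplicity, ← pow_dvd_iff_le_emultiplicity]

end Int

theorem stmt_0_general (p : ℕ) (hp : p.Prime) (hp2 : 2 < p) (n : ℕ)
    (γ : ℤ) (hγ : γ ≡ 1 [ZMOD p]) (δ₁ δ₂ : ℕ) :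
    (∑ i ∈ Finset.range δ₁, γ ^ i) ≡ (∑ i ∈ Finset.range δ₂, γ ^ i) [ZMOD p ^ n] ↔
      (δ₁ : ℤ) ≡ (δ₂ : ℤ) [ZMOD p ^ n] := by
  wlog hle : δ₂ ≤ δ₁ generalizing δ₁ δ₂
  · exact Int.modEq_comm.trans ((this δ₂ δ₁ (by omega)).trans Int.modEq_comm)
  obtain ⟨d, rfl⟩ := Nat.exists_eq_add_of_le hle
  have hcop : IsCoprime ((p : ℤ) ^ n) (γ ^ δ₂) := (Int.isCoprime_of_modEq_one hγ).pow
  rw [Int.modEq_comm, Int.modEq_iff_dvd, geom_sum_range_add, add_sub_cancel_left,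
    Int.modEq_comm, Int.modEq_iff_dvd, Nat.cast_add, add_sub_cancel_left,
    ← Int.pow_dvd_geom_sum_iff hp (hp.odd_of_ne_two (by omega)) hγ]
  exact ⟨hcop.dvd_of_dvd_mul_left, (·.mul_left _)⟩

theorem stmt_0 (p : ℕ) (hp : p.Prime) (hp2 : 2 < p) (n : ℕ) (hn : 1 ≤ n)
    (γ : ℤ) (hγ : γ ≡ 1 [ZMOD p]) (δ₁ δ₂ : ℕ) :
    (∑ i ∈ Finset.range δ₁, γ ^ i) ≡ (∑ i ∈ Finset.range δ₂, γ ^ i) [ZMOD p ^ n] ↔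
      (δ₁ : ℤ) ≡ (δ₂ : ℤ) [ZMOD p ^ n] :=
  stmt_0_general p hp hp2 n γ hγ δ₁ δ₂
end

section
/- Let p be an odd prime and b an integer with b^{p^m} ≡ 1 (mod p^n), where n ≥ 1. Then p^m divides f_b(p^m) = Σ_{i=0}^{p^m - 1} b^i, but p^{m+1} does not divide f_b(p^m). -/
/-!
By Fermat's little theorem the hypothesis forces `b ≡ 1 [ZMOD p]`. Then
`(b - 1) * f_b(p^m) = b^(p^m) - 1`, and lifting the exponent gives
`v_p(b^(p^m) - 1) = v_p(b - 1) + m`, so `v_p(f_b(p^m)) = m` (directly so when `b = 1`).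
-/

open Finset

theorem Int.ModEq.of_pow_prime_pow {p : ℕ} (hp : p.Prime) {a b : ℤ} {m : ℕ}
    (h : a ^ p ^ m ≡ b ^ p ^ m [ZMOD p]) : a ≡ b [ZMOD p] := by
  have := Fact.mk hp
  rw [← ZMod.intCast_eq_intCast_iff] at h ⊢
  push_cast at h
  rwa [ZMod.pow_card_pow, ZMod.pow_card_pow] at h

theorem emultiplicity_geom_sum_prime_pow {p : ℕ} (hp : p.Prime) (hodd : Odd p) {b : ℤ}
    (hb : (p : ℤ) ∣ b - 1) (m : ℕ) :
    emultiplicity (p : ℤ) (∑ i ∈ range (p ^ m), b ^ i) = m := by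
  have hprime : Prime (p : ℤ) := Nat.prime_iff_prime_int.mp hp
  obtain rfl | hb1 := eq_or_ne b 1
  · simpa using emultiplicity_pow_self_of_prime hprime m
  have hfin : FiniteMultiplicity (p : ℤ) (b - 1) :=
    Int.finiteMultiplicity_iff.mpr ⟨by simpa using hp.ne_one, sub_ne_zero.mpr hb1⟩
  have hpb : ¬ (p : ℤ) ∣ b := fun h =>
    hprime.not_dvd_one (by simpa using dvd_sub h hb)
  have lte := emultiplicity_pow_prime_pow_sub_pow_prime_pow hprime hodd
    (by simpa using hb) hpb m (y := 1)
  rw [one_pow, ← geom_sum_mul, emultiplicity_mul hprime, hfin.emultiplicity_eq_multiplicity,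
    add_comm] at lte
  exact WithTop.add_left_cancel (ENat.natCast_ne_top _) lte

theorem stmt_1 (p : ℕ) (hp : p.Prime) (hodd : Odd p) (m n : ℕ) (hn : 1 ≤ n)
    (b : ℤ) (hb : b ^ (p ^ m) ≡ 1 [ZMOD p ^ n]) :
    ((p : ℤ) ^ m ∣ ∑ i ∈ Finset.range (p ^ m), b ^ i) ∧
      ¬ ((p : ℤ) ^ (m + 1) ∣ ∑ i ∈ Finset.range (p ^ m), b ^ i) := by
  have hbp : b ^ p ^ m ≡ 1 ^ p ^ m [ZMOD p] := by
    simpa using hb.of_dvd (dvd_pow_self _ (by omega))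
  have hb1 : (p : ℤ) ∣ b - 1 := (hbp.of_pow_prime_pow hp).symm.dvd
  exact emultiplicity_eq_coe.mp (emultiplicity_geom_sum_prime_pow hp hodd hb1 m)
end

section
/- Let N be an odd positive integer whose radical R(N) (the product of its distinct prime divisors) is a Burnside number, i.e., gcd(R(N), φ(R(N))) = 1. Let p be a prime dividing N with p^α || N, and let b be a unit in ℤ/p^αℤ with b^m = 1 for some m dividing N. Then b^{p^{α-1}} = 1. -/
/-!
The order of `b` divides both `N` and `|(ℤ/p^αℤ)ˣ| = p^(α-1) (p-1)`. Since `p ∣ R(N)`, `p - 1`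
divides `φ(R(N))`, which is coprime to `N` because it is coprime to `R(N)`. Hence the order of `b`
is coprime to `p - 1` and so divides `p^(α-1)`.
-/

/-- The radical of `n`: the product of its distinct prime divisors. -/
def Nat.rad (n : ℕ) : ℕ := n.primeFactors.prod id

namespace Nat

theorem dvd_rad_of_mem_primeFactors {n p : ℕ} (hp : p ∈ n.primeFactors) : p ∣ n.rad :=
  Finset.dvd_prod_of_mem id hp

theorem Coprime.of_rad_left {n m : ℕ} (hn : n ≠ 0) (h : Coprime n.rad m) : Coprime n m :=
  coprime_of_dvd fun _ hq hqn =>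
    (hq.coprime_iff_not_dvd).1 <|
      h.coprime_dvd_left (dvd_rad_of_mem_primeFactors (mem_primeFactors.2 ⟨hq, hqn, hn⟩))

theorem Prime.sub_one_dvd_totient {p k : ℕ} (hp : p.Prime) (h : p ∣ k) : p - 1 ∣ φ k :=
  totient_prime hp ▸ totient_dvd_of_dvd h

end Nat

theorem ZMod.orderOf_unit_dvd_prime_pow_pred_mul {p α : ℕ} (hp : p.Prime)
    (b : (ZMod (p ^ α))ˣ) : orderOf b ∣ p ^ (α - 1) * (p - 1) := by
  have : NeZero (p ^ α) := ⟨pow_ne_zero _ hp.ne_zero⟩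
  refine (orderOf_dvd_card (x := b)).trans ?_
  rw [ZMod.card_units_eq_totient]
  rcases Nat.eq_zero_or_pos α with rfl | hα
  · simp
  · rw [Nat.totient_prime_pow hp hα]

theorem stmt_15_general (N : ℕ) (hN : 0 < N)
    (hBurnside : Nat.Coprime N.rad (Nat.totient N.rad))
    (p : ℕ) (hp : p.Prime) (hpN : p ∣ N) (α : ℕ)
    (b : (ZMod (p ^ α))ˣ) (m : ℕ) (hm : m ∣ N) (hb : b ^ m = 1) :
    b ^ (p ^ (α - 1)) = 1 := by
  have hN_totient : Nat.Coprime N (Nat.totient N.rad) := hBurnside.of_rad_left hN.ne'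
  have hp_rad : p ∣ N.rad :=
    Nat.dvd_rad_of_mem_primeFactors (Nat.mem_primeFactors.2 ⟨hp, hpN, hN.ne'⟩)
  have hord : Nat.Coprime (orderOf b) (p - 1) :=
    (hN_totient.coprime_dvd_left ((orderOf_dvd_of_pow_eq_one hb).trans hm)).coprime_dvd_right
      (hp.sub_one_dvd_totient hp_rad)
  exact orderOf_dvd_iff_pow_eq_one.1
    (hord.dvd_of_dvd_mul_right (ZMod.orderOf_unit_dvd_prime_pow_pred_mul hp b))

theorem stmt_15 (N : ℕ) (hN : 0 < N) (hodd : Odd N)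
    (hBurnside : Nat.Coprime N.rad (Nat.totient N.rad))
    (p : ℕ) (hp : p.Prime) (hpN : p ∣ N) (α : ℕ) (hα : α = N.factorization p)
    (b : (ZMod (p ^ α))ˣ) (m : ℕ) (hm : m ∣ N) (hb : b ^ m = 1) :
    b ^ (p ^ (α - 1)) = 1 :=
  stmt_15_general N hN hBurnside p hp hpN α b m hm hb
end
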